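/- Let H be a real Hilbert space, let T be a compact positive self-adjoint operator on H, let α ∈ [0,1], let w₀ ∈ H, and set h₀ := T^α w₀, where T^α is the α-th power of T given by the continuous functional calculus (with t⁰ = 1 for t ≥ 0). Then for every λ > 0, ‖(T + λI)⁻¹ T h₀ − h₀‖ ≤ λ^α · ‖w₀‖. -/

import Mathlib

set_option synthInstance.maxHeartbeats 1000000
set_option maxHeartbeats 1000000
set_option linter.unusedSectionVars false
set_option linter.unusedVariables false
set_option linter.deprecated false

open ContinuousLinearMap Polynomial RealInnerProductSpace

section RegressionBiasAux

variable {H : Type*} [NormedAddCommGroup H] [InnerProductSpace ℝ H] [CompleteSpace H]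


lemma aeval_isSelfAdjoint (T : H →L[ℝ] H) (hT : IsSelfAdjoint T) (p : ℝ[X]) :
    IsSelfAdjoint (aeval T p : H →L[ℝ] H) := by
  induction p using Polynomial.induction_on' with
  | add p q hp hq => rw [map_add]; exact hp.add hq
  | monomial n a =>
    rw [aeval_monomial]
    show star _ = _
    rw [star_mul, star_pow, hT.star_eq]
    have : star (algebraMap ℝ (H →L[ℝ] H) a) = algebraMap ℝ (H →L[ℝ] H) a := by
      rw [Algebra.algebraMap_eq_smul_one, star_smul, star_one, star_trivial]
    rw [this]
    exact (Algebra.commutes a (T ^ n)).symm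

lemma symm_inner (A : H →L[ℝ] H) (hA : IsSelfAdjoint A) (x y : H) :
    ⟪A x, y⟫ = ⟪x, A y⟫ :=
  (ContinuousLinearMap.isSelfAdjoint_iff_isSymmetric.mp hA) x y

lemma isUnit_of_coercive (A : H →L[ℝ] H) {c : ℝ} (hc : 0 < c)
    (h : ∀ x, c * ‖x‖ ^ 2 ≤ ⟪A x, x⟫) : IsUnit A := by
  refine isUnit_of_forall_le_norm_inner_map A (c := ⟨c, hc.le⟩) (by exact_mod_cast hc) ?_
  intro x
  calc ‖x‖ ^ 2 * (⟨c, hc.le⟩ : NNReal) = c * ‖x‖ ^ 2 := by push_cast; ring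
  _ ≤ ⟪A x, x⟫ := h x
  _ ≤ ‖⟪A x, x⟫‖ := le_abs_self _

lemma inner_T_le (T : H →L[ℝ] H) (x : H) : ⟪T x, x⟫ ≤ ‖T‖ * ‖x‖ ^ 2 := by
  calc ⟪T x, x⟫ ≤ ‖T x‖ * ‖x‖ := real_inner_le_norm _ _
  _ ≤ (‖T‖ * ‖x‖) * ‖x‖ := by
      have := T.le_opNorm x
      have h0 : (0:ℝ) ≤ ‖x‖ := norm_nonneg _
      nlinarith [norm_nonneg (T x)]
  _ = ‖T‖ * ‖x‖ ^ 2 := by ring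

/-- T - x • 1 is a unit when x is real, outside [0, ‖T‖], T positive. -/
lemma isUnit_sub_smul (T : H →L[ℝ] H) (hT : T.IsPositive) {x : ℝ}
    (hx : x ∉ Set.Icc (0:ℝ) ‖T‖) : IsUnit (T - x • (1 : H →L[ℝ] H)) := by
  rw [Set.mem_Icc, not_and_or, not_le, not_le] at hx
  rcases hx with hx | hx
  · apply isUnit_of_coercive _ (c := -x) (by linarith)
    intro y
    have h1 : (0:ℝ) ≤ ⟪T y, y⟫ := hT.inner_nonneg_left y
    have h2 : ⟪(T - x • (1 : H →L[ℝ] H)) y, y⟫ = ⟪T y, y⟫ - x * ‖y‖ ^ 2 := by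
      simp [sub_apply, smul_apply, one_apply, inner_sub_left, real_inner_smul_left,
        real_inner_self_eq_norm_sq]
    rw [h2]; nlinarith
  · have : IsUnit (x • (1 : H →L[ℝ] H) - T) := by
      apply isUnit_of_coercive _ (c := x - ‖T‖) (by linarith)
      intro y
      have h1 := inner_T_le T y
      have h2 : ⟪(x • (1 : H →L[ℝ] H) - T) y, y⟫ = x * ‖y‖ ^ 2 - ⟪T y, y⟫ := by
        simp [sub_apply, smul_apply, one_apply, inner_sub_left, real_inner_smul_left,
          real_inner_self_eq_norm_sq]
      rw [h2]; nlinarith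
    have := this.neg
    rwa [neg_sub] at this

/-- (T - a)² + b² is a unit for b ≠ 0. -/
lemma isUnit_quadratic (T : H →L[ℝ] H) (hT : T.IsPositive) (a : ℝ) {b : ℝ} (hb : b ≠ 0) :
    IsUnit ((T - a • (1 : H →L[ℝ] H)) ^ 2 + (b ^ 2) • (1 : H →L[ℝ] H)) := by
  set S := T - a • (1 : H →L[ℝ] H) with hS
  have hSsa : IsSelfAdjoint S := by
    apply hT.isSelfAdjoint.sub
    show star _ = _
    rw [star_smul, star_one, star_trivial]
  apply isUnit_of_coercive _ (c := b ^ 2) (by positivity)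
  intro y
  have h2 : ⟪(S ^ 2 + (b ^ 2) • (1 : H →L[ℝ] H)) y, y⟫ = ⟪S (S y), y⟫ + b ^ 2 * ‖y‖ ^ 2 := by
    simp [add_apply, smul_apply, one_apply, inner_add_left, real_inner_smul_left,
      real_inner_self_eq_norm_sq, pow_two, mul_apply]
  have h3 : ⟪S (S y), y⟫ = ⟪S y, S y⟫ :=
    (ContinuousLinearMap.isSelfAdjoint_iff_isSymmetric.mp hSsa) (S y) y
  rw [h2, h3, real_inner_self_eq_norm_sq]
  nlinarith [sq_nonneg ‖S y‖]






lemma isUnit_aeval_of_no_roots (T : H →L[ℝ] H) (hT : T.IsPositive) :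
    ∀ (n : ℕ) (r : ℝ[X]), r.natDegree ≤ n →
      (∀ t ∈ Set.Icc (0:ℝ) ‖T‖, r.eval t ≠ 0) → IsUnit (aeval T r : H →L[ℝ] H) := by
  have h0mem : (0:ℝ) ∈ Set.Icc (0:ℝ) ‖T‖ := ⟨le_refl _, norm_nonneg _⟩
  have base : ∀ r : ℝ[X], r.natDegree = 0 →
      (∀ t ∈ Set.Icc (0:ℝ) ‖T‖, r.eval t ≠ 0) → IsUnit (aeval T r : H →L[ℝ] H) := by
    intro r h0 hroots
    have hC : r = C (r.coeff 0) := Polynomial.eq_C_of_natDegree_le_zero h0.le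
    have hc : r.coeff 0 ≠ 0 := by
      intro h
      exact hroots 0 h0mem (by rw [hC, h]; simp)
    rw [hC, aeval_C]
    exact (isUnit_iff_ne_zero.mpr hc).map (algebraMap ℝ (H →L[ℝ] H))
  intro n
  induction n with
  | zero =>
    intro r hdeg hroots
    exact base r (Nat.le_zero.mp hdeg) hroots
  | succ n ih =>
    intro r hdeg hroots
    by_cases h0 : r.natDegree = 0
    · exact base r h0 hroots
    have hdeg1 : 1 ≤ r.natDegree := Nat.one_le_iff_ne_zero.mpr h0
    have hrne : r ≠ 0 := by
      intro h
      exact hroots 0 h0mem (by rw [h]; simp)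
    set rc := r.map (algebraMap ℝ ℂ) with hrc
    have hrcne : rc ≠ 0 := by
      rw [hrc, Ne, Polynomial.map_eq_zero_iff (algebraMap ℝ ℂ).injective]
      exact hrne
    have hrcdeg : rc.degree ≠ 0 := by
      rw [hrc, Polynomial.degree_map_eq_of_injective (algebraMap ℝ ℂ).injective]
      rw [Polynomial.degree_eq_natDegree hrne]
      exact_mod_cast fun h => h0 (by exact_mod_cast h)
    obtain ⟨z, hz⟩ := Complex.isAlgClosed.exists_root rc hrcdeg
    have hz : rc.eval z = 0 := hz
    by_cases him : z.im = 0
    · -- real root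
      have hx : r.IsRoot z.re := by
        have hzre : ((z.re : ℂ)) = z := by
          apply Complex.ext <;> simp [him]
        have h1 : rc.eval ((z.re : ℂ)) = 0 := by rw [hzre]; exact hz
        rw [hrc, Polynomial.eval_map, show ((z.re:ℂ)) = algebraMap ℝ ℂ z.re from rfl,
          Polynomial.eval₂_at_apply] at h1
        have h2 : ((r.eval z.re : ℝ) : ℂ) = 0 := h1
        show r.eval z.re = 0
        exact_mod_cast h2
      obtain ⟨r₂, hfac⟩ := Polynomial.dvd_iff_isRoot.mpr hx
      have hxout : z.re ∉ Set.Icc (0:ℝ) ‖T‖ := fun hmem => hroots _ hmem hx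
      have hr₂ne : r₂ ≠ 0 := by
        rintro rfl; rw [mul_zero] at hfac; exact hrne hfac
      have hdeg₂ : r₂.natDegree ≤ n := by
        have hmul := Polynomial.natDegree_mul (Polynomial.X_sub_C_ne_zero z.re) hr₂ne
        rw [← hfac, Polynomial.natDegree_X_sub_C] at hmul
        omega
      have hroots₂ : ∀ t ∈ Set.Icc (0:ℝ) ‖T‖, r₂.eval t ≠ 0 := by
        intro t ht h2
        exact hroots t ht (by rw [hfac, Polynomial.eval_mul, h2, mul_zero])
      rw [hfac, map_mul]
      have hu1 : IsUnit (aeval T (X - C z.re) : H →L[ℝ] H) := by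
        rw [map_sub, aeval_X, aeval_C, Algebra.algebraMap_eq_smul_one]
        exact isUnit_sub_smul T hT hxout
      exact hu1.mul (ih r₂ hdeg₂ hroots₂)
    · -- complex root
      set a := z.re with ha
      set b := z.im with hb
      set g : ℝ[X] := (X - C a) ^ 2 + C (b ^ 2) with hg
      have hXa : ((X : ℝ[X]) - C a).Monic := Polynomial.monic_X_sub_C a
      have hgmonic : g.Monic := by
        apply (hXa.pow 2).add_of_left
        rw [Polynomial.degree_pow, Polynomial.degree_X_sub_C]
        exact lt_of_le_of_lt Polynomial.degree_C_le (by norm_num)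
      have hgdeg : g.natDegree = 2 := by
        rw [hg, Polynomial.natDegree_add_C, Polynomial.natDegree_pow,
          Polynomial.natDegree_X_sub_C]
      set gc := g.map (algebraMap ℝ ℂ) with hgc
      have hgc_eval : ∀ w : ℂ, gc.eval w = (w - (a:ℂ)) ^ 2 + (b:ℂ) ^ 2 := by
        intro w
        simp [hgc, hg, Polynomial.eval_map]
      have hza : (z - (a:ℂ)) = (b:ℂ) * Complex.I := by
        linear_combination -Complex.re_add_im z
      have hgcz : gc.eval z = 0 := by
        rw [hgc_eval, hza]
        linear_combination ((b:ℂ) ^ 2) * Complex.I_sq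
      have hzbar : ((starRingEnd ℂ) z - (a:ℂ)) = -((b:ℂ) * Complex.I) := by
        have h1 : (starRingEnd ℂ) z = (a:ℂ) - (b:ℂ) * Complex.I := by
          apply Complex.ext <;> simp [ha, hb]
        rw [h1]; ring
      have hgczbar : gc.eval ((starRingEnd ℂ) z) = 0 := by
        rw [hgc_eval, hzbar]
        linear_combination ((b:ℂ) ^ 2) * Complex.I_sq
      have hrczbar : rc.eval ((starRingEnd ℂ) z) = 0 := by
        have hcomp : ((starRingEnd ℂ) : ℂ →+* ℂ).comp (algebraMap ℝ ℂ) = algebraMap ℝ ℂ := by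
          ext x; exact Complex.conj_ofReal x
        have h1 : (starRingEnd ℂ) (rc.eval z) = rc.eval ((starRingEnd ℂ) z) := by
          rw [hrc, Polynomial.eval_map, Polynomial.eval_map, Polynomial.hom_eval₂, hcomp]
        rw [← h1, hz, map_zero]
      -- the remainder r %ₘ g is zero
      set m := r %ₘ g with hm
      have hmc : m.map (algebraMap ℝ ℂ) = rc %ₘ gc := Polynomial.map_modByMonic _ hgmonic
      have hdegm : m.degree ≤ 1 := by
        have h1 := Polynomial.degree_modByMonic_lt r hgmonic
        have h2 : g.degree = 2 := by
          rw [Polynomial.degree_eq_natDegree hgmonic.ne_zero, hgdeg]; rfl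
        rw [h2] at h1
        exact Order.le_of_lt_succ (by exact_mod_cast h1)
      have hmeq : m = C (m.coeff 1) * X + C (m.coeff 0) :=
        Polynomial.eq_X_add_C_of_degree_le_one hdegm
      have hmcz : (m.map (algebraMap ℝ ℂ)).eval z = 0 := by
        have hdiv := Polynomial.modByMonic_add_div rc gc
        have : (rc %ₘ gc).eval z + gc.eval z * (rc /ₘ gc).eval z = rc.eval z := by
          rw [← Polynomial.eval_mul, ← Polynomial.eval_add, hdiv]
        rw [hgcz, hz, zero_mul, add_zero] at this
        rw [hmc, this]
      have hmczbar : (m.map (algebraMap ℝ ℂ)).eval ((starRingEnd ℂ) z) = 0 := by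
        have hdiv := Polynomial.modByMonic_add_div rc gc
        have : (rc %ₘ gc).eval ((starRingEnd ℂ) z) + gc.eval ((starRingEnd ℂ) z) *
            (rc /ₘ gc).eval ((starRingEnd ℂ) z) = rc.eval ((starRingEnd ℂ) z) := by
          rw [← Polynomial.eval_mul, ← Polynomial.eval_add, hdiv]
        rw [hgczbar, hrczbar, zero_mul, add_zero] at this
        rw [hmc, this]
      have hm0 : m = 0 := by
        have e1 : (m.coeff 1 : ℂ) * z + (m.coeff 0 : ℂ) = 0 := by
          have := hmcz
          rw [hmeq] at this
          simpa using this
        have e2 : (m.coeff 1 : ℂ) * (starRingEnd ℂ) z + (m.coeff 0 : ℂ) = 0 := by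
          have := hmczbar
          rw [hmeq] at this
          simpa using this
        have hzz : z - (starRingEnd ℂ) z ≠ 0 := by
          intro h
          apply him
          have : (starRingEnd ℂ) z = z := by linear_combination -h
          exact (Complex.conj_eq_iff_im.mp this)
        have hc1 : (m.coeff 1 : ℂ) = 0 := by
          have h3 : (m.coeff 1 : ℂ) * (z - (starRingEnd ℂ) z) = 0 := by
            linear_combination e1 - e2
          rcases mul_eq_zero.mp h3 with h | h
          · exact h
          · exact absurd h hzz
        have hc0 : (m.coeff 0 : ℂ) = 0 := by
          rw [hc1, zero_mul, zero_add] at e1; exact e1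
        rw [hmeq]
        have h1 : m.coeff 1 = 0 := by exact_mod_cast hc1
        have h0' : m.coeff 0 = 0 := by exact_mod_cast hc0
        rw [h1, h0']; simp
      have hfac : r = g * (r /ₘ g) := by
        have hdiv := Polynomial.modByMonic_add_div r g
        conv_lhs => rw [← hdiv]
        rw [← hm, hm0, zero_add]
      set r₂ := r /ₘ g with hr₂
      have hr₂ne : r₂ ≠ 0 := by
        rintro h; rw [h, mul_zero] at hfac; exact hrne hfac
      have hdeg₂ : r₂.natDegree ≤ n := by
        have hmul := Polynomial.natDegree_mul hgmonic.ne_zero hr₂ne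
        rw [← hfac, hgdeg] at hmul
        omega
      have hroots₂ : ∀ t ∈ Set.Icc (0:ℝ) ‖T‖, r₂.eval t ≠ 0 := by
        intro t ht h2
        exact hroots t ht (by rw [hfac, Polynomial.eval_mul, h2, mul_zero])
      rw [hfac, map_mul]
      have hu1 : IsUnit (aeval T g : H →L[ℝ] H) := by
        rw [hg, map_add, map_pow, map_sub, aeval_X, aeval_C, aeval_C,
          Algebra.algebraMap_eq_smul_one, Algebra.algebraMap_eq_smul_one]
        exact isUnit_quadratic T hT a him
      exact hu1.mul (ih r₂ hdeg₂ hroots₂)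








lemma aeval_inner_nonneg (T : H →L[ℝ] H) (hT : T.IsPositive) (q : ℝ[X])
    (hq : ∀ t ∈ Set.Icc (0:ℝ) ‖T‖, 0 ≤ q.eval t) (u : H) :
    0 ≤ ⟪(aeval T q : H →L[ℝ] H) u, u⟫ := by
  by_cases hsub : Subsingleton H
  · rw [Subsingleton.elim u 0]; simp
  have : Nontrivial H := not_subsingleton_iff_nontrivial.mp hsub
  set S : H →L[ℝ] H := aeval T q with hSdef
  by_contra hneg
  push_neg at hneg
  have hu0 : u ≠ 0 := by rintro rfl; simp at hneg
  set Φ : H → ℝ := fun x => ⟪S x, x⟫ with hΦ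
  set E := Φ '' Metric.sphere (0:H) 1 with hE
  have hbdd : BddBelow E := by
    refine ⟨-‖S‖, ?_⟩
    rintro y ⟨x, hx, rfl⟩
    have hx1 : ‖x‖ = 1 := mem_sphere_zero_iff_norm.mp hx
    have h1 : |⟪S x, x⟫| ≤ ‖S x‖ * ‖x‖ := abs_real_inner_le_norm _ _
    have h2 : ‖S x‖ ≤ ‖S‖ := by simpa [hx1] using S.le_opNorm x
    have h3 := neg_abs_le ⟪S x, x⟫
    show -‖S‖ ≤ Φ x
    simp only [hΦ]
    nlinarith [norm_nonneg (S x)]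
  have hunorm : ‖u‖ ≠ 0 := norm_ne_zero_iff.mpr hu0
  have hmemu : (‖u‖⁻¹ • u) ∈ Metric.sphere (0:H) 1 := by
    rw [mem_sphere_zero_iff_norm, norm_smul, norm_inv, norm_norm, inv_mul_cancel₀ hunorm]
  have hne : E.Nonempty := ⟨_, Set.mem_image_of_mem _ hmemu⟩
  set m := sInf E with hm
  have hΦscale : ∀ x : H, Φ (‖x‖⁻¹ • x) = ‖x‖⁻¹ ^ 2 * ⟪S x, x⟫ := by
    intro x
    simp only [hΦ, map_smul, real_inner_smul_left, real_inner_smul_right]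
    ring
  have hmneg : m < 0 := by
    have h1 : m ≤ Φ (‖u‖⁻¹ • u) := csInf_le hbdd (Set.mem_image_of_mem _ hmemu)
    have h2 : Φ (‖u‖⁻¹ • u) < 0 := by
      rw [hΦscale u]
      have h3 : (0:ℝ) < ‖u‖⁻¹ ^ 2 := by positivity
      nlinarith
    linarith
  have hlow : ∀ x : H, m * ‖x‖ ^ 2 ≤ ⟪S x, x⟫ := by
    intro x
    rcases eq_or_ne x 0 with rfl | hx
    · simp
    · have hxnorm : ‖x‖ ≠ 0 := norm_ne_zero_iff.mpr hx
      have hmem : (‖x‖⁻¹ • x) ∈ Metric.sphere (0:H) 1 := by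
        rw [mem_sphere_zero_iff_norm, norm_smul, norm_inv, norm_norm, inv_mul_cancel₀ hxnorm]
      have h1 : m ≤ Φ (‖x‖⁻¹ • x) := csInf_le hbdd (Set.mem_image_of_mem _ hmem)
      rw [hΦscale x] at h1
      have hx2 : (0:ℝ) < ‖x‖ ^ 2 := by positivity
      have hx3 : ‖x‖⁻¹ ^ 2 * ‖x‖ ^ 2 = 1 := by
        field_simp
      have h4 := mul_le_mul_of_nonneg_right h1 hx2.le
      have h5 : ‖x‖⁻¹ ^ 2 * ⟪S x, x⟫ * ‖x‖ ^ 2 = ⟪S x, x⟫ := by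
        rw [mul_comm (‖x‖⁻¹ ^ 2) _, mul_assoc, hx3, mul_one]
      linarith
  set A : H →L[ℝ] H := S - m • (1 : H →L[ℝ] H) with hA
  have hApoly : A = aeval T (q - C m) := by
    rw [map_sub, aeval_C, Algebra.algebraMap_eq_smul_one, hA, hSdef]
  have hAunit : IsUnit A := by
    rw [hApoly]
    apply isUnit_aeval_of_no_roots T hT (q - C m).natDegree _ le_rfl
    intro t ht
    have := hq t ht
    rw [Polynomial.eval_sub, Polynomial.eval_C]
    intro hcontra
    linarith [hmneg]
  have hAx : ∀ x : H, A x = S x - m • x := by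
    intro x; simp [hA, sub_apply, smul_apply, one_apply]
  have hAform : ∀ x : H, 0 ≤ ⟪A x, x⟫ := by
    intro x
    rw [hAx, inner_sub_left, real_inner_smul_left, real_inner_self_eq_norm_sq]
    have := hlow x
    nlinarith
  have hAsa : IsSelfAdjoint A := by
    rw [hApoly]; exact aeval_isSelfAdjoint T hT.isSelfAdjoint _
  have hAsym : ∀ x y : H, ⟪A x, y⟫ = ⟪x, A y⟫ :=
    fun x y => (ContinuousLinearMap.isSelfAdjoint_iff_isSymmetric.mp hAsa) x y
  have hCS : ∀ x y : H, ⟪A x, y⟫ ^ 2 ≤ ⟪A x, x⟫ * ⟪A y, y⟫ := by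
    intro x y
    have hquad : ∀ t : ℝ, 0 ≤ ⟪A y, y⟫ * (t * t) + (2 * ⟪A x, y⟫) * t + ⟪A x, x⟫ := by
      intro t
      have h0 := hAform (x + t • y)
      have h1 : ⟪A y, x⟫ = ⟪A x, y⟫ := by rw [hAsym y x, real_inner_comm]
      have hexp : ⟪A (x + t • y), x + t • y⟫ =
          ⟪A x, x⟫ + 2 * t * ⟪A x, y⟫ + t ^ 2 * ⟪A y, y⟫ := by
        simp only [map_add, map_smul, inner_add_left, inner_add_right,
          real_inner_smul_left, real_inner_smul_right, h1]
        ring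
      rw [hexp] at h0
      nlinarith
    have hdisc := discrim_le_zero hquad
    rw [discrim] at hdisc
    nlinarith
  set c₀ := ‖((hAunit.unit⁻¹ : (H →L[ℝ] H)ˣ) : H →L[ℝ] H)‖ with hc0
  have hlb : ∀ x : H, ‖x‖ ≤ c₀ * ‖A x‖ := by
    intro x
    have h2 : ((hAunit.unit⁻¹ : (H →L[ℝ] H)ˣ) : H →L[ℝ] H) * A = 1 :=
      hAunit.val_inv_mul
    have h1 : ((hAunit.unit⁻¹ : (H →L[ℝ] H)ˣ) : H →L[ℝ] H) (A x) = x := by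
      calc ((hAunit.unit⁻¹ : (H →L[ℝ] H)ˣ) : H →L[ℝ] H) (A x)
          = (((hAunit.unit⁻¹ : (H →L[ℝ] H)ˣ) : H →L[ℝ] H) * A) x := rfl
      _ = x := by rw [h2]; rfl
    calc ‖x‖ = ‖((hAunit.unit⁻¹ : (H →L[ℝ] H)ˣ) : H →L[ℝ] H) (A x)‖ := by rw [h1]
    _ ≤ c₀ * ‖A x‖ := le_opNorm _ _
  obtain ⟨x₀, hx₀⟩ : ∃ x : H, x ≠ 0 := exists_ne 0
  have hc0pos : 0 < c₀ := by
    rcases lt_or_ge 0 c₀ with h | h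
    · exact h
    · exfalso
      have h1 := hlb x₀
      have h2 : ‖A x₀‖ ≥ 0 := norm_nonneg _
      have h3 : ‖x₀‖ > 0 := norm_pos_iff.mpr hx₀
      nlinarith
  have hAnormpos : 0 < ‖A‖ := by
    rcases (norm_nonneg A).lt_or_eq with h | h
    · exact h
    · exfalso
      have hA0 : A = 0 := by rwa [eq_comm, ContinuousLinearMap.opNorm_zero_iff] at h
      have h1 := hlb x₀
      rw [hA0] at h1
      simp at h1
      exact hx₀ h1
  have hkey : ∀ x : H, ‖x‖ = 1 → 1 / (c₀ ^ 2 * ‖A‖) ≤ ⟪A x, x⟫ := by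
    intro x hx1
    have h8 : 1 ≤ c₀ * ‖A x‖ := by have := hlb x; rwa [hx1] at this
    have hAx0 : 0 < ‖A x‖ := by nlinarith [norm_nonneg (A x)]
    have hcs := hCS x (A x)
    have h5 : ⟪A (A x), A x⟫ ≤ ‖A‖ * ‖A x‖ ^ 2 := inner_T_le A (A x)
    have hselfinner : ⟪A x, A x⟫ = ‖A x‖ ^ 2 := real_inner_self_eq_norm_sq _
    rw [hselfinner] at hcs
    have h6 : ‖A x‖ ^ 2 ≤ ⟪A x, x⟫ * ‖A‖ := by
      have h7 : (0:ℝ) < ‖A x‖ ^ 2 := by positivity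
      nlinarith [hAform x, hAform (A x)]
    rw [div_le_iff₀ (by positivity)]
    nlinarith
  have hfin : m + 1 / (c₀ ^ 2 * ‖A‖) ≤ m := by
    rw [hm]
    apply le_csInf hne
    rintro y ⟨x, hx, rfl⟩
    have hx1 : ‖x‖ = 1 := mem_sphere_zero_iff_norm.mp hx
    have h1 := hkey x hx1
    have h9 : Φ x = ⟪A x, x⟫ + m := by
      simp only [hΦ]
      rw [hAx, inner_sub_left, real_inner_smul_left, real_inner_self_eq_norm_sq, hx1]
      ring
    show m + 1 / (c₀ ^ 2 * ‖A‖) ≤ Φ x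
    rw [h9]
    linarith
  have hδ : 0 < 1 / (c₀ ^ 2 * ‖A‖) := by positivity
  linarith

end RegressionBiasAux

/-- **Regression bias bound under the source condition.**
Let `H` be a real Hilbert space, `T` a compact positive self-adjoint operator on
`H`, `α ∈ [0,1]`, `w₀ ∈ H` and `h₀ := T^α w₀`, where `T^α` is the `α`-th power of
`T` given by the continuous functional calculus (with the convention `t⁰ = 1` for
`t ≥ 0`).  Here the functional calculus is encoded by its defining property:
`T^α` is the (unique) operator approximated in operator norm by `p(T)` for
polynomials `p` approximating `t ↦ t^α` uniformly on `[0, ‖T‖]` (which contains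
the spectrum of `T`).  Then for every `λ > 0`,
`‖(T + λI)⁻¹ T h₀ − h₀‖ ≤ λ^α ‖w₀‖`, with real powers (`0⁰ = 1`). -/
theorem regression_bias_bound
    {H : Type*} [NormedAddCommGroup H] [InnerProductSpace ℝ H] [CompleteSpace H]
    (T : H →L[ℝ] H) (hT : T.IsPositive) (hTcompact : IsCompactOperator T)
    (α : ℝ) (hα0 : 0 ≤ α) (hα1 : α ≤ 1) (w₀ : H)
    (Tα : H →L[ℝ] H)
    (hTα : ∀ ε > (0 : ℝ), ∃ p : Polynomial ℝ,
      (∀ t ∈ Set.Icc (0 : ℝ) ‖T‖, |Polynomial.eval t p - t ^ α| ≤ ε) ∧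
      ‖(Polynomial.aeval T p : H →L[ℝ] H) - Tα‖ ≤ ε)
    (h₀ : H) (hh₀ : h₀ = Tα w₀) :
    ∀ lam : ℝ, 0 < lam →
      ‖Ring.inverse (T + lam • (1 : H →L[ℝ] H)) (T h₀) - h₀‖ ≤ lam ^ α * ‖w₀‖ := by
  intro lam hlam
  set L : H →L[ℝ] H := T + lam • (1 : H →L[ℝ] H) with hL
  have hLapp : ∀ x : H, L x = T x + lam • x := by
    intro x; simp [hL, add_apply, smul_apply, one_apply]
  have hLco : ∀ x : H, lam * ‖x‖ ^ 2 ≤ ⟪L x, x⟫ := by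
    intro x
    have h1 : (0:ℝ) ≤ ⟪T x, x⟫ := by simpa using hT.inner_nonneg_left x
    have h2 : ⟪L x, x⟫ = ⟪T x, x⟫ + lam * ‖x‖ ^ 2 := by
      rw [hLapp, inner_add_left, real_inner_smul_left, real_inner_self_eq_norm_sq]
    rw [h2]; linarith
  have hLunit : IsUnit L := isUnit_of_coercive L hlam hLco
  have hLsa : IsSelfAdjoint L := by
    apply hT.isSelfAdjoint.add
    show star _ = _
    rw [star_smul, star_one, star_trivial]
  set Li : H →L[ℝ] H := Ring.inverse L with hLi
  have hmul1 : Li * L = 1 := Ring.inverse_mul_cancel L hLunit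
  have hmul2 : L * Li = 1 := Ring.mul_inverse_cancel L hLunit
  have hLiL : ∀ x, Li (L x) = x := by
    intro x
    calc Li (L x) = (Li * L) x := rfl
    _ = x := by rw [hmul1]; rfl
  have hLLi : ∀ x, L (Li x) = x := by
    intro x
    calc L (Li x) = (L * Li) x := rfl
    _ = x := by rw [hmul2]; rfl
  have hid : Li (T h₀) - h₀ = -(lam • Li h₀) := by
    have e1 : T h₀ = L h₀ - lam • h₀ := by rw [hLapp]; abel
    rw [e1, map_sub, hLiL, map_smul]
    abel
  rw [hid, norm_neg, norm_smul, Real.norm_eq_abs, abs_of_pos hlam]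
  have hLib : ∀ y : H, ‖Li y‖ ≤ lam⁻¹ * ‖y‖ := by
    intro y
    rcases eq_or_ne (‖Li y‖) 0 with h | h
    · rw [h]; positivity
    · have h1 := hLco (Li y)
      rw [hLLi] at h1
      have h2 : ⟪y, Li y⟫ ≤ ‖y‖ * ‖Li y‖ := real_inner_le_norm _ _
      have h3 : 0 < ‖Li y‖ := (norm_nonneg _).lt_of_ne' h
      have h4 : lam * ‖Li y‖ ≤ ‖y‖ := by nlinarith
      calc ‖Li y‖ = lam⁻¹ * (lam * ‖Li y‖) := by field_simp
      _ ≤ lam⁻¹ * ‖y‖ := mul_le_mul_of_nonneg_left h4 (by positivity)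
  have hrpowpos : 0 < lam ^ α := Real.rpow_pos_of_pos hlam α
  apply le_of_forall_pos_le_add
  intro ε' hε'
  set D : ℝ := 2 * ‖w₀‖ with hD
  have hDnn : 0 ≤ D := by positivity
  set ε : ℝ := ε' / (D + 1) with hε
  have hεpos : 0 < ε := by positivity
  obtain ⟨p, hp_sup, hp_norm⟩ := hTα ε hεpos
  set c : ℝ := lam ^ α + ε with hc
  have hcpos : 0 < c := by positivity
  set pT : H →L[ℝ] H := aeval T p with hpT
  have hLaev : (aeval T (X + C lam) : H →L[ℝ] H) = L := by
    rw [map_add, aeval_X, aeval_C, Algebra.algebraMap_eq_smul_one]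
  have hcommL : Commute L pT := by
    have h1 : Commute (aeval T (X + C lam) : H →L[ℝ] H) (aeval T p) :=
      (Commute.all (X + C lam) p).map (aeval T)
    rwa [hLaev] at h1
  have hcomm : ∀ x, Li (pT x) = pT (Li x) := by
    have h2 : Commute Li pT := by
      have h3 : Commute (hLunit.unit : H →L[ℝ] H) pT := by
        rwa [hLunit.unit_spec]
      have h4 := h3.units_inv_left
      have h5 : Li = ((hLunit.unit⁻¹ : (H →L[ℝ] H)ˣ) : H →L[ℝ] H) := by
        have h6 : ((hLunit.unit⁻¹ : (H →L[ℝ] H)ˣ) : H →L[ℝ] H) * L = 1 := hLunit.val_inv_mul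
        calc Li = 1 * Li := (one_mul _).symm
        _ = (((hLunit.unit⁻¹ : (H →L[ℝ] H)ˣ) : H →L[ℝ] H) * L) * Li := by rw [h6]
        _ = ((hLunit.unit⁻¹ : (H →L[ℝ] H)ˣ) : H →L[ℝ] H) * (L * Li) := by rw [mul_assoc]
        _ = ((hLunit.unit⁻¹ : (H →L[ℝ] H)ˣ) : H →L[ℝ] H) := by rw [hmul2, mul_one]
      rwa [← h5] at h4
    intro x
    calc Li (pT x) = (Li * pT) x := rfl
    _ = (pT * Li) x := by rw [h2.eq]
    _ = pT (Li x) := rfl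
  have hpTsa : IsSelfAdjoint pT := aeval_isSelfAdjoint T hT.isSelfAdjoint p
  -- main quadratic estimate
  have hquad : ∀ v : H, lam * ‖pT v‖ ≤ c * ‖L v‖ := by
    intro v
    set s : ℝ[X] := C (c ^ 2) * (X + C lam) ^ 2 - C (lam ^ 2) * p ^ 2 with hs
    have hseval : ∀ t ∈ Set.Icc (0:ℝ) ‖T‖, 0 ≤ s.eval t := by
      intro t ht
      have hp := hp_sup t ht
      have ht0 : 0 ≤ t := ht.1
      have htpow : 0 ≤ t ^ α := Real.rpow_nonneg ht0 α
      have htk : t ^ α * lam ^ (1 - α) ≤ α * t + (1 - α) * lam :=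
        Real.geom_mean_le_arith_mean2_weighted hα0 (by linarith) ht0 hlam.le (by ring)
      have hlam_split : lam ^ α * lam ^ (1 - α) = lam := by
        rw [← Real.rpow_add hlam]
        norm_num
      have h1 : lam * t ^ α ≤ lam ^ α * (t + lam) := by
        calc lam * t ^ α = lam ^ α * (t ^ α * lam ^ (1 - α)) := by
              rw [show lam ^ α * (t ^ α * lam ^ (1-α)) = (lam ^ α * lam ^ (1-α)) * t ^ α by ring,
                hlam_split]
        _ ≤ lam ^ α * (α * t + (1 - α) * lam) :=
              mul_le_mul_of_nonneg_left htk hrpowpos.le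
        _ ≤ lam ^ α * (t + lam) := by
              apply mul_le_mul_of_nonneg_left _ hrpowpos.le
              nlinarith
      have h3 : |p.eval t| ≤ t ^ α + ε := by
        calc |p.eval t| = |(p.eval t - t ^ α) + t ^ α| := by ring_nf
        _ ≤ |p.eval t - t ^ α| + |t ^ α| := abs_add_le _ _
        _ ≤ ε + t ^ α := by rw [abs_of_nonneg htpow]; linarith
        _ = t ^ α + ε := by ring
      have h2 : lam * |p.eval t| ≤ c * (t + lam) := by
        have hl1 : lam ≤ t + lam := by linarith
        calc lam * |p.eval t| ≤ lam * (t ^ α + ε) :=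
              mul_le_mul_of_nonneg_left h3 hlam.le
        _ = lam * t ^ α + lam * ε := by ring
        _ ≤ lam ^ α * (t + lam) + ε * (t + lam) := by nlinarith
        _ = c * (t + lam) := by rw [hc]; ring
      have h4 : (lam * |p.eval t|) ^ 2 ≤ (c * (t + lam)) ^ 2 := by
        apply pow_le_pow_left₀ (by positivity) h2
      have h5 : s.eval t = c ^ 2 * (t + lam) ^ 2 - lam ^ 2 * (p.eval t) ^ 2 := by
        simp [hs]
      rw [h5]
      have h6 : (lam * |p.eval t|) ^ 2 = lam ^ 2 * (p.eval t) ^ 2 := by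
        rw [mul_pow, sq_abs]
      nlinarith [h4, h6]
    have hpos := aeval_inner_nonneg T hT s hseval v
    have hexp : (aeval T s : H →L[ℝ] H) = c ^ 2 • (L * L) - lam ^ 2 • (pT * pT) := by
      rw [hs, map_sub, map_mul, map_mul]
      rw [show ((X : ℝ[X]) + C lam) ^ 2 = (X + C lam) * (X + C lam) from sq _]
      rw [show (p : ℝ[X]) ^ 2 = p * p from sq _]
      rw [map_mul, map_mul, hLaev, aeval_C, aeval_C]
      rw [Algebra.algebraMap_eq_smul_one, Algebra.algebraMap_eq_smul_one]
      rw [smul_mul_assoc, smul_mul_assoc, one_mul, one_mul, hpT]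
    have happ : (aeval T s : H →L[ℝ] H) v = c ^ 2 • L (L v) - lam ^ 2 • pT (pT v) := by
      rw [hexp]
      simp [ContinuousLinearMap.sub_apply, ContinuousLinearMap.smul_apply,
        ContinuousLinearMap.mul_apply]
    rw [happ, inner_sub_left, real_inner_smul_left, real_inner_smul_left] at hpos
    have hLL : ⟪L (L v), v⟫ = ‖L v‖ ^ 2 := by
      rw [symm_inner L hLsa (L v) v, real_inner_self_eq_norm_sq]
    have hpp : ⟪pT (pT v), v⟫ = ‖pT v‖ ^ 2 := by
      rw [symm_inner pT hpTsa (pT v) v, real_inner_self_eq_norm_sq]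
    rw [hLL, hpp] at hpos
    have hsq : (lam * ‖pT v‖) ^ 2 ≤ (c * ‖L v‖) ^ 2 := by
      rw [mul_pow, mul_pow]
      nlinarith
    have hbn : 0 ≤ c * ‖L v‖ := by positivity
    nlinarith [norm_nonneg (pT v), hsq, hbn, hlam.le]
  -- assemble
  rw [hh₀]
  have hsplit : Li (Tα w₀) = Li ((Tα - pT) w₀) + pT (Li w₀) := by
    rw [← hcomm, ← map_add]
    congr 1
    rw [sub_apply, sub_add_cancel]
  have hb1 : ‖Li ((Tα - pT) w₀)‖ ≤ lam⁻¹ * (ε * ‖w₀‖) := by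
    calc ‖Li ((Tα - pT) w₀)‖ ≤ lam⁻¹ * ‖(Tα - pT) w₀‖ := hLib _
    _ ≤ lam⁻¹ * (ε * ‖w₀‖) := by
        apply mul_le_mul_of_nonneg_left _ (by positivity)
        calc ‖(Tα - pT) w₀‖ ≤ ‖Tα - pT‖ * ‖w₀‖ := le_opNorm _ _
        _ ≤ ε * ‖w₀‖ := by
            apply mul_le_mul_of_nonneg_right _ (norm_nonneg _)
            rw [← norm_neg, neg_sub]
            exact hp_norm
  have hb2 : lam * ‖pT (Li w₀)‖ ≤ c * ‖w₀‖ := by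
    have := hquad (Li w₀)
    rwa [hLLi] at this
  have hεD : ε * D ≤ ε' := by
    have h7 : ε * (D + 1) = ε' := by
      rw [hε]; field_simp
    nlinarith [hεpos]
  calc lam * ‖Li (Tα w₀)‖
      ≤ lam * (‖Li ((Tα - pT) w₀)‖ + ‖pT (Li w₀)‖) := by
        apply mul_le_mul_of_nonneg_left _ hlam.le
        rw [hsplit]
        exact norm_add_le _ _
    _ = lam * ‖Li ((Tα - pT) w₀)‖ + lam * ‖pT (Li w₀)‖ := by ring
    _ ≤ lam * (lam⁻¹ * (ε * ‖w₀‖)) + c * ‖w₀‖ := by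
        exact add_le_add (mul_le_mul_of_nonneg_left hb1 hlam.le) hb2
    _ = ε * ‖w₀‖ + c * ‖w₀‖ := by
        rw [show lam * (lam⁻¹ * (ε * ‖w₀‖)) = (lam * lam⁻¹) * (ε * ‖w₀‖) by ring,
          mul_inv_cancel₀ hlam.ne', one_mul]
    _ = lam ^ α * ‖w₀‖ + ε * D := by rw [hc, hD]; ring
    _ ≤ lam ^ α * ‖w₀‖ + ε' := by linarith
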